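/- arXiv:2601.02108 — 2 statements merged into one kernel-verified Lean document; each statement's English description precedes it below -/
import Mathlib

section
/- Energy decrease of one scheme step (Lemma 4.3): Let H be an n×n real symmetric matrix with λ₁·Iₙ ≤ H ≤ 0 in the Loewner order, where λ₁ < 0. Let U, Ũ, Û, U' be n×N real matrices and s ≥ 0 satisfy Û = U − s·𝒜_Ũ·Ũ, Ũ = (U + Û)/2, and U' = Û − s·H·Û·(I_N − Ûᵀ·Û). If Uᵀ·U ≤ I_N, then E(U) − E(U') ≥ s·(1/2 − (s/2)·|λ₁|)·‖𝒜_Ũ·Ũ‖_F². -/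
open Matrix

noncomputable section

/-- The skew-symmetric commutator 𝒜_W = H·W·Wᵀ − W·Wᵀ·H. -/
def commA {n N : ℕ} (H : Matrix (Fin n) (Fin n) ℝ) (W : Matrix (Fin n) (Fin N) ℝ) :
    Matrix (Fin n) (Fin n) ℝ :=
  H * W * Wᵀ - W * Wᵀ * H

/-- Loewner order: X ≤ Y iff Y − X is positive semidefinite. -/
def loewnerLE {k : ℕ} (X Y : Matrix (Fin k) (Fin k) ℝ) : Prop :=
  (Y - X).PosSemidef

/-- Frobenius norm of a real matrix. -/
def frobNorm {m k : ℕ} (A : Matrix (Fin m) (Fin k) ℝ) : ℝ :=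
  Real.sqrt (∑ i, ∑ j, (A i j) ^ 2)

/-- The energy E(W) = (1/2)·tr(Wᵀ·H·W). -/
def energy {n N : ℕ} (H : Matrix (Fin n) (Fin n) ℝ) (W : Matrix (Fin n) (Fin N) ℝ) : ℝ :=
  (1 / 2 : ℝ) * Matrix.trace (Wᵀ * H * W)

/-!
The predictor is the implicit midpoint rule for `U ↦ -𝒜_U U`, with `Ũ` as midpoint. Since `𝒜_Ũ`
is skew, the Gram matrix is preserved, `ÛᵀÛ = UᵀU`, and `E(U) - E(Û) = s·tr((𝒜_Ũ Ũ)ᵀ H Ũ)`,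
which equals `(s/2)‖𝒜_Ũ‖²_F`. From `ŨᵀŨ ≤ UᵀU ≤ I` we get `ŨŨᵀ ≤ I` and so
`‖𝒜_Ũ Ũ‖_F ≤ ‖𝒜_Ũ‖_F`. The corrector `Û ↦ Û - s H Û D` with `D = I - ÛᵀÛ ≥ 0` cannot raise the
energy: its first-order change is `-s·tr((HÛ) D (HÛ)ᵀ) ≤ 0` and its second-order term is
`E(s H Û D) ≤ 0` because `H ≤ 0`. Hence `E(U) - E(U') ≥ (s/2)‖𝒜_Ũ Ũ‖²_F`.
-/

section PosSemidef

variable {m k : Type*} [Fintype m] [Fintype k] [DecidableEq m]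

lemma Matrix.PosSemidef.one_sub_mul_transpose [DecidableEq k] {W : Matrix m k ℝ}
    (h : (1 - Wᵀ * W).PosSemidef) : (1 - W * Wᵀ).PosSemidef := by
  set P := W * Wᵀ
  have hP : Pᵀ = P := by simp [P]
  -- `P - P² = W (1 - WᵀW) Wᵀ` and `1 - P = (1 - P)ᵀ(1 - P) + (P - P²)`.
  have hPP : (P - P * P).PosSemidef := by
    have := h.mul_mul_conjTranspose_same W
    rwa [conjTranspose_eq_transpose_of_trivial, Matrix.mul_sub, Matrix.sub_mul, Matrix.mul_one,
      ← Matrix.mul_assoc, Matrix.mul_assoc (W * Wᵀ)] at this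
  have hsq := posSemidef_conjTranspose_mul_self (1 - P)
  rw [conjTranspose_eq_transpose_of_trivial, transpose_sub, transpose_one, hP] at hsq
  convert hsq.add hPP using 1
  simp only [Matrix.sub_mul, Matrix.mul_sub, Matrix.one_mul, Matrix.mul_one]
  abel

lemma trace_transpose_mul_self_mul_le (K : Matrix m m ℝ) (W : Matrix m k ℝ)
    (hW : (1 - W * Wᵀ).PosSemidef) : trace ((K * W)ᵀ * (K * W)) ≤ trace (Kᵀ * K) := by
  have := (hW.mul_mul_conjTranspose_same K).trace_nonneg
  rw [conjTranspose_eq_transpose_of_trivial, Matrix.mul_sub, Matrix.sub_mul, trace_sub,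
    Matrix.mul_one, trace_mul_comm K Kᵀ] at this
  rw [trace_mul_comm, transpose_mul]
  simpa [Matrix.mul_assoc] using this

end PosSemidef

section Gram

variable {m k : Type*} [Fintype m]

lemma transpose_mul_add_transpose_mul_smul_eq_zero {K : Matrix m m ℝ} (hK : Kᵀ = -K)
    (W : Matrix m k ℝ) (c : ℝ) : Wᵀ * (c • (K * W)) + (c • (K * W))ᵀ * W = 0 := by
  rw [transpose_smul, transpose_mul, hK]
  simp [Matrix.mul_assoc]

variable {W B : Matrix m k ℝ}

lemma add_transpose_mul_add_of_cross_eq_zero (h : Wᵀ * B + Bᵀ * W = 0) :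
    (W + B)ᵀ * (W + B) = Wᵀ * W + Bᵀ * B := by
  rw [transpose_add, Matrix.add_mul, Matrix.mul_add, Matrix.mul_add, ← sub_eq_zero, ← h]
  abel

lemma sub_transpose_mul_sub_of_cross_eq_zero (h : Wᵀ * B + Bᵀ * W = 0) :
    (W - B)ᵀ * (W - B) = Wᵀ * W + Bᵀ * B := by
  rw [transpose_sub, Matrix.sub_mul, Matrix.mul_sub, Matrix.mul_sub, ← sub_eq_zero, ← neg_eq_zero,
    ← h]
  abel

end Gram

lemma midpoint_step {E : Type*} [AddCommGroup E] [Module ℝ E] {u ut uh a : E} {s : ℝ}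
    (hpred : uh = u - s • a) (hmid : ut = (1 / 2 : ℝ) • (u + uh)) :
    u = ut + (s / 2) • a ∧ uh = ut - (s / 2) • a := by
  subst hpred hmid
  constructor <;> module

lemma frobNorm_sq {m k : ℕ} (A : Matrix (Fin m) (Fin k) ℝ) :
    frobNorm A ^ 2 = trace (Aᵀ * A) := by
  rw [frobNorm, Real.sq_sqrt (by positivity), trace, Finset.sum_comm]
  simp [mul_apply, sq]

section EnergyAndCommutator

variable {n N : ℕ} {H : Matrix (Fin n) (Fin n) ℝ}

lemma energy_add (hH : H.IsSymm) (X Y : Matrix (Fin n) (Fin N) ℝ) :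
    energy H (X + Y) = energy H X + trace (Yᵀ * H * X) + energy H Y := by
  have hXY : trace (Xᵀ * H * Y) = trace (Yᵀ * H * X) := by
    rw [← trace_transpose]
    simp [Matrix.mul_assoc, hH.eq]
  simp only [energy, transpose_add, Matrix.add_mul, Matrix.mul_add, trace_add, hXY]
  ring

lemma energy_neg (X : Matrix (Fin n) (Fin N) ℝ) : energy H (-X) = energy H X := by
  simp [energy]

lemma energy_sub (hH : H.IsSymm) (X Y : Matrix (Fin n) (Fin N) ℝ) :
    energy H (X - Y) = energy H X - trace (Yᵀ * H * X) + energy H Y := by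
  rw [sub_eq_add_neg, energy_add hH, energy_neg]
  simp [sub_eq_add_neg]

lemma energy_add_sub_energy_sub (hH : H.IsSymm) (X Y : Matrix (Fin n) (Fin N) ℝ) :
    energy H (X + Y) - energy H (X - Y) = 2 * trace (Yᵀ * H * X) := by
  rw [energy_add hH, energy_sub hH]
  ring

lemma energy_nonpos (hH : (-H).PosSemidef) (X : Matrix (Fin n) (Fin N) ℝ) : energy H X ≤ 0 := by
  have := (hH.conjTranspose_mul_mul_same X).trace_nonneg
  simp only [conjTranspose_eq_transpose_of_trivial, Matrix.mul_neg, Matrix.neg_mul,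
    trace_neg, neg_nonneg] at this
  rw [energy]
  linarith

lemma energy_sub_smul_mul_mul_le (hH : H.IsSymm) (hHnp : (-H).PosSemidef)
    {D : Matrix (Fin N) (Fin N) ℝ} (hD : D.PosSemidef) {s : ℝ} (hs : 0 ≤ s)
    (V : Matrix (Fin n) (Fin N) ℝ) : energy H (V - s • (H * V * D)) ≤ energy H V := by
  have hfirst : 0 ≤ trace ((H * V * D)ᵀ * H * V) := by
    have := (hD.mul_mul_conjTranspose_same (H * V)).trace_nonneg
    have hDT : Dᵀ = D := by simpa [conjTranspose_eq_transpose_of_trivial] using hD.isHermitian.eq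
    rw [conjTranspose_eq_transpose_of_trivial] at this
    rwa [Matrix.mul_assoc, trace_mul_comm, transpose_mul, hDT, ← Matrix.mul_assoc]
  rw [energy_sub hH, transpose_smul, Matrix.smul_mul, Matrix.smul_mul, trace_smul, smul_eq_mul]
  nlinarith [energy_nonpos hHnp (s • (H * V * D))]

lemma commA_transpose (hH : H.IsSymm) (W : Matrix (Fin n) (Fin N) ℝ) :
    (commA H W)ᵀ = -commA H W := by
  simp [commA, hH.eq, Matrix.mul_assoc]

lemma trace_commA_mul_transpose_mul (hH : H.IsSymm) (W : Matrix (Fin n) (Fin N) ℝ) :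
    trace ((commA H W * W)ᵀ * H * W) = 1 / 2 * trace ((commA H W)ᵀ * commA H W) := by
  set K := commA H W
  have hKT : Kᵀ = -K := commA_transpose hH W
  have hlhs : trace ((K * W)ᵀ * H * W) = -trace (K * H * (W * Wᵀ)) := by
    rw [transpose_mul, hKT, Matrix.mul_assoc, Matrix.mul_assoc, trace_mul_comm]
    simp [Matrix.mul_assoc]
  have hK : K = H * (W * Wᵀ) - W * Wᵀ * H := by simp [K, commA, Matrix.mul_assoc]
  have hswap : trace (K * (W * Wᵀ) * H) = -trace (K * H * (W * Wᵀ)) := by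
    rw [← trace_transpose]
    simp only [transpose_mul, hKT, hH.eq, transpose_transpose, Matrix.mul_neg, trace_neg]
    rw [← Matrix.mul_assoc, trace_mul_comm, Matrix.mul_assoc]
  generalize W * Wᵀ = P at hK hlhs hswap
  have hrhs : trace (Kᵀ * K) = -2 * trace (K * H * P) := by
    nth_rw 2 [hK]
    rw [hKT, Matrix.neg_mul, trace_neg, Matrix.mul_sub, trace_sub, ← Matrix.mul_assoc,
      ← Matrix.mul_assoc, hswap]
    ring
  rw [hlhs, hrhs]
  ring

end EnergyAndCommutator


theorem energy_decrease_one_step_general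
    {n N : ℕ} (H : Matrix (Fin n) (Fin n) ℝ) (hH : H.IsSymm)
    (lam1 : ℝ)
    (hHup : loewnerLE H 0)
    (U Ut Uhat U' : Matrix (Fin n) (Fin N) ℝ) (s : ℝ) (hs : 0 ≤ s)
    (hpred : Uhat = U - s • (commA H Ut * Ut))
    (hmid : Ut = (1 / 2 : ℝ) • (U + Uhat))
    (hcorr : U' = Uhat - s • (H * Uhat * (1 - Uhatᵀ * Uhat)))
    (hUle : loewnerLE (Uᵀ * U) 1) :
    energy H U - energy H U' ≥ s * (1 / 2 - s / 2 * |lam1|) * frobNorm (commA H Ut * Ut) ^ 2 := by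
  set K := commA H Ut
  set B := (s / 2) • (K * Ut)
  obtain ⟨hU, hUhat⟩ := midpoint_step hpred hmid
  have hcross : Utᵀ * B + Bᵀ * Ut = 0 :=
    transpose_mul_add_transpose_mul_smul_eq_zero (commA_transpose hH Ut) Ut (s / 2)
  have hgram : Uhatᵀ * Uhat = Uᵀ * U := by
    rw [hU, hUhat, add_transpose_mul_add_of_cross_eq_zero hcross,
      sub_transpose_mul_sub_of_cross_eq_zero hcross]
  have hUt : (1 - Utᵀ * Ut).PosSemidef := by
    have hsplit : 1 - Utᵀ * Ut = (1 - Uᵀ * U) + Bᵀ * B := by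
      rw [hU, add_transpose_mul_add_of_cross_eq_zero hcross]
      abel
    rw [hsplit]
    exact hUle.add (by simpa using posSemidef_conjTranspose_mul_self B)
  have hpredictor : energy H U - energy H Uhat = s / 2 * trace (Kᵀ * K) := by
    rw [hU, hUhat, energy_add_sub_energy_sub hH, transpose_smul, Matrix.smul_mul,
      Matrix.smul_mul, trace_smul, smul_eq_mul, trace_commA_mul_transpose_mul hH]
    ring
  have hshrink := trace_transpose_mul_self_mul_le K Ut hUt.one_sub_mul_transpose
  have hcorrector : energy H U' ≤ energy H Uhat := by
    rw [hcorr]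
    refine energy_sub_smul_mul_mul_le hH (by simpa [loewnerLE] using hHup) ?_ hs Uhat
    rwa [hgram]
  have hnonneg : 0 ≤ trace ((K * Ut)ᵀ * (K * Ut)) := by
    simpa using (posSemidef_conjTranspose_mul_self (K * Ut)).trace_nonneg
  rw [ge_iff_le, frobNorm_sq]
  nlinarith [mul_le_mul_of_nonneg_left hshrink hs, mul_nonneg (mul_nonneg (sq_nonneg s)
    (abs_nonneg lam1)) hnonneg]

/-- Energy decrease of one scheme step (Lemma 4.3). -/
theorem energy_decrease_one_step
    {n N : ℕ} (H : Matrix (Fin n) (Fin n) ℝ) (hH : H.IsSymm)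
    (lam1 : ℝ) (hlam1 : lam1 < 0)
    (hHlow : loewnerLE (lam1 • (1 : Matrix (Fin n) (Fin n) ℝ)) H)
    (hHup : loewnerLE H 0)
    (U Ut Uhat U' : Matrix (Fin n) (Fin N) ℝ) (s : ℝ) (hs : 0 ≤ s)
    (hpred : Uhat = U - s • (commA H Ut * Ut))
    (hmid : Ut = (1 / 2 : ℝ) • (U + Uhat))
    (hcorr : U' = Uhat - s • (H * Uhat * (1 - Uhatᵀ * Uhat)))
    (hUle : loewnerLE (Uᵀ * U) 1) :
    energy H U - energy H U' ≥ s * (1 / 2 - s / 2 * |lam1|) * frobNorm (commA H Ut * Ut) ^ 2 :=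
  energy_decrease_one_step_general H hH lam1 hHup U Ut Uhat U' s hs hpred hmid hcorr hUle
end
end

section
/- Corrector residual bound (from the proof of Lemma 4.6): Let H be an n×n real symmetric matrix with σ_max(H) ≤ M. Let U, Û, V be n×N real matrices with Ûᵀ·Û = Uᵀ·U, Vᵀ·V = I_N, and σ_max(U) ≤ α. Then ‖H·Û·(I_N − Ûᵀ·Û)‖_F ≤ M·α·(α + 1)·‖U − V‖_F. -/
open Matrix

noncomputable section

/-- Largest singular value (ℓ²-operator norm) of a real matrix. -/
def sigmaMax {m k : ℕ} (A : Matrix (Fin m) (Fin k) ℝ) : ℝ :=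
  ‖LinearMap.toContinuousLinearMap (Matrix.toEuclideanLin A)‖

/-!
Because `VᵀV = 1` and `ÛᵀÛ = UᵀU`, the defect `1 - ÛᵀÛ = Vᵀ(V - U) + (V - U)ᵀU` is linear in
`U - V`, so its Frobenius norm is at most `(‖U‖₂ + 1)‖U - V‖_F`. Left multiplication by `HÛ`
costs a factor `‖HÛ‖₂ ≤ ‖H‖₂‖Û‖₂ = ‖H‖₂‖U‖₂` through the mixed bound `‖AB‖_F ≤ ‖A‖₂‖B‖_F`,
and `‖Û‖₂ = ‖U‖₂` because the two matrices have the same Gram matrix.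
-/

section Frobenius

attribute [local instance] Matrix.frobeniusNormedAddCommGroup

variable {m k : ℕ}

lemma frobNorm_eq_frobenius_norm (A : Matrix (Fin m) (Fin k) ℝ) : frobNorm A = ‖A‖ := by
  simp only [frobNorm, frobenius_norm_def, Real.sqrt_eq_rpow, Real.norm_eq_abs, sq_abs,
    Real.rpow_two]

lemma frobNorm_nonneg (A : Matrix (Fin m) (Fin k) ℝ) : 0 ≤ frobNorm A :=
  Real.sqrt_nonneg _

lemma frobNorm_add_le (A B : Matrix (Fin m) (Fin k) ℝ) :
    frobNorm (A + B) ≤ frobNorm A + frobNorm B := by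
  simpa only [frobNorm_eq_frobenius_norm] using norm_add_le A B

lemma frobNorm_sub_comm (A B : Matrix (Fin m) (Fin k) ℝ) :
    frobNorm (A - B) = frobNorm (B - A) := by
  simpa only [frobNorm_eq_frobenius_norm] using norm_sub_rev A B

lemma frobNorm_transpose (A : Matrix (Fin m) (Fin k) ℝ) : frobNorm Aᵀ = frobNorm A := by
  simpa only [frobNorm_eq_frobenius_norm] using frobenius_norm_transpose A

end Frobenius

open scoped Matrix.Norms.L2Operator

section L2Operator

variable {𝕜 : Type*} [RCLike 𝕜] {m n : Type*} [Fintype m] [Fintype n] [DecidableEq n]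

lemma l2_opNorm_eq_of_conjTranspose_mul_self_eq {A B : Matrix m n 𝕜} (h : Aᴴ * A = Bᴴ * B) :
    ‖A‖ = ‖B‖ := by
  rw [← mul_self_inj (norm_nonneg A) (norm_nonneg B), ← l2_opNorm_conjTranspose_mul_self,
    ← l2_opNorm_conjTranspose_mul_self, h]

lemma l2_opNorm_one_le : ‖(1 : Matrix n n 𝕜)‖ ≤ 1 := by
  rw [← l2_opNorm_toEuclideanCLM, map_one]
  exact ContinuousLinearMap.norm_id_le

lemma l2_opNorm_le_one_of_conjTranspose_mul_self_eq_one {A : Matrix m n 𝕜} (h : Aᴴ * A = 1) :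
    ‖A‖ ≤ 1 := by
  have hsq : ‖A‖ * ‖A‖ ≤ 1 * 1 := by
    rw [← l2_opNorm_conjTranspose_mul_self, h, one_mul]
    exact l2_opNorm_one_le
  exact (mul_self_le_mul_self_iff (norm_nonneg A) zero_le_one).mpr hsq

lemma l2_opNorm_transpose [DecidableEq m] (A : Matrix m n ℝ) : ‖Aᵀ‖ = ‖A‖ := by
  rw [← conjTranspose_eq_transpose_of_trivial, l2_opNorm_conjTranspose]

end L2Operator

section Mixed

variable {l m k : ℕ}

lemma sigmaMax_eq_l2_opNorm (A : Matrix (Fin m) (Fin k) ℝ) : sigmaMax A = ‖A‖ := rfl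

lemma frobNorm_sq_eq_sum_col (A : Matrix (Fin m) (Fin k) ℝ) :
    frobNorm A ^ 2 = ∑ j, ‖WithLp.toLp 2 (Aᵀ j)‖ ^ 2 := by
  rw [frobNorm, Real.sq_sqrt (by positivity), Finset.sum_comm]
  simp only [EuclideanSpace.norm_sq_eq, Real.norm_eq_abs, sq_abs, transpose_apply]

lemma frobNorm_mul_le (A : Matrix (Fin m) (Fin l) ℝ) (B : Matrix (Fin l) (Fin k) ℝ) :
    frobNorm (A * B) ≤ ‖A‖ * frobNorm B := by
  have hcol (j : Fin k) : ‖WithLp.toLp 2 ((A * B)ᵀ j)‖ ≤ ‖A‖ * ‖WithLp.toLp 2 (Bᵀ j)‖ := by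
    rw [transpose_mul, mul_apply_eq_vecMul, vecMul_transpose]
    exact l2_opNorm_mulVec A _
  refine le_of_pow_le_pow_left₀ two_ne_zero (mul_nonneg (norm_nonneg A) (frobNorm_nonneg B)) ?_
  rw [mul_pow, frobNorm_sq_eq_sum_col, frobNorm_sq_eq_sum_col, Finset.mul_sum]
  gcongr with j
  rw [← mul_pow]
  exact pow_le_pow_left₀ (norm_nonneg _) (hcol j) 2

lemma frobNorm_one_sub_transpose_mul_self_le {n N : ℕ} (U V : Matrix (Fin n) (Fin N) ℝ)
    (hV : Vᵀ * V = 1) : frobNorm (1 - Uᵀ * U) ≤ (‖U‖ + 1) * frobNorm (U - V) := by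
  have hdecomp : 1 - Uᵀ * U = Vᵀ * (V - U) + ((V - U)ᵀ * U) := by
    rw [← hV, transpose_sub, Matrix.mul_sub, Matrix.sub_mul]
    abel
  have hVt : ‖Vᵀ‖ ≤ 1 := by
    rw [l2_opNorm_transpose]
    exact l2_opNorm_le_one_of_conjTranspose_mul_self_eq_one
      (by rwa [conjTranspose_eq_transpose_of_trivial])
  calc frobNorm (1 - Uᵀ * U)
      ≤ frobNorm (Vᵀ * (V - U)) + frobNorm ((V - U)ᵀ * U) := hdecomp ▸ frobNorm_add_le _ _
    _ = frobNorm (Vᵀ * (V - U)) + frobNorm (Uᵀ * (V - U)) := by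
        rw [← frobNorm_transpose ((V - U)ᵀ * U), transpose_mul, transpose_transpose]
    _ ≤ ‖Vᵀ‖ * frobNorm (V - U) + ‖Uᵀ‖ * frobNorm (V - U) :=
        add_le_add (frobNorm_mul_le _ _) (frobNorm_mul_le _ _)
    _ ≤ (‖U‖ + 1) * frobNorm (U - V) := by
        rw [l2_opNorm_transpose U, frobNorm_sub_comm V U]
        linarith [mul_le_mul_of_nonneg_right hVt (frobNorm_nonneg (U - V))]

end Mixed

theorem corrector_residual_bound_general
    {n N : ℕ} (H : Matrix (Fin n) (Fin n) ℝ)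
    (M α : ℝ) (hM : sigmaMax H ≤ M)
    (U Uhat V : Matrix (Fin n) (Fin N) ℝ)
    (hgram : Uhatᵀ * Uhat = Uᵀ * U)
    (hV : Vᵀ * V = 1)
    (hU : sigmaMax U ≤ α) :
    frobNorm (H * Uhat * (1 - Uhatᵀ * Uhat)) ≤ M * α * (α + 1) * frobNorm (U - V) := by
  rw [sigmaMax_eq_l2_opNorm] at hM hU
  have hUhat : ‖Uhat‖ = ‖U‖ := l2_opNorm_eq_of_conjTranspose_mul_self_eq (by
    simpa only [conjTranspose_eq_transpose_of_trivial] using hgram)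
  have hHUhat : ‖H * Uhat‖ ≤ M * α := (l2_opNorm_mul H Uhat).trans <|
    mul_le_mul hM (hUhat ▸ hU) (norm_nonneg _) ((norm_nonneg H).trans hM)
  have hres : frobNorm (1 - Uhatᵀ * Uhat) ≤ (α + 1) * frobNorm (U - V) := by
    rw [hgram]
    exact (frobNorm_one_sub_transpose_mul_self_le U V hV).trans <|
      mul_le_mul_of_nonneg_right (by linarith) (frobNorm_nonneg _)
  calc frobNorm (H * Uhat * (1 - Uhatᵀ * Uhat))
      ≤ ‖H * Uhat‖ * frobNorm (1 - Uhatᵀ * Uhat) := frobNorm_mul_le _ _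
    _ ≤ M * α * ((α + 1) * frobNorm (U - V)) :=
        mul_le_mul hHUhat hres (frobNorm_nonneg _) ((norm_nonneg _).trans hHUhat)
    _ = M * α * (α + 1) * frobNorm (U - V) := by ring

/-- Corrector residual bound (from the proof of Lemma 4.6). -/
theorem corrector_residual_bound
    {n N : ℕ} (H : Matrix (Fin n) (Fin n) ℝ) (hH : H.IsSymm)
    (M α : ℝ) (hM : sigmaMax H ≤ M)
    (U Uhat V : Matrix (Fin n) (Fin N) ℝ)
    (hgram : Uhatᵀ * Uhat = Uᵀ * U)
    (hV : Vᵀ * V = 1)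
    (hU : sigmaMax U ≤ α) :
    frobNorm (H * Uhat * (1 - Uhatᵀ * Uhat)) ≤ M * α * (α + 1) * frobNorm (U - V) :=
  corrector_residual_bound_general H M α hM U Uhat V hgram hV hU
end
end
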